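/- arXiv:1603.04005 — 2 statements merged into one kernel-verified Lean document; each statement's English description precedes it below -/
import Mathlib

section
/- For every n ≥ 2, the distinguishing number of the join K_{1,n} + K_{1,n} of two star graphs equals n + 1. -/
open SimpleGraph

/-- The join of two graphs: disjoint union plus all edges between the parts. -/
def joinGraph {V W : Type*} (G : SimpleGraph V) (H : SimpleGraph W) : SimpleGraph (V ⊕ W) where
  Adj x y :=
    match x, y with
    | Sum.inl a, Sum.inl b => G.Adj a b
    | Sum.inr a, Sum.inr b => H.Adj a b
    | Sum.inl _, Sum.inr _ => True
    | Sum.inr _, Sum.inl _ => True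
  symm := by constructor; rintro (a|a) (b|b) h <;> first | exact h.symm | trivial
  loopless := by constructor; rintro (a|a) h <;> exact (SimpleGraph.irrefl _) h

instance joinGraphDecidableAdj {V W : Type*} {G : SimpleGraph V} {H : SimpleGraph W}
    [DecidableRel G.Adj] [DecidableRel H.Adj] : DecidableRel (joinGraph G H).Adj
  | Sum.inl a, Sum.inl b => inferInstanceAs (Decidable (G.Adj a b))
  | Sum.inr a, Sum.inr b => inferInstanceAs (Decidable (H.Adj a b))
  | Sum.inl _, Sum.inr _ => Decidable.isTrue trivial
  | Sum.inr _, Sum.inl _ => Decidable.isTrue trivial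

/-- The distinguishing number: least `d` admitting a vertex `d`-labeling preserved only by
the identity automorphism. -/
noncomputable def distinguishingNumber {V : Type*} (G : SimpleGraph V) : ℕ :=
  sInf {d : ℕ | ∃ c : V → Fin d, ∀ f : G ≃g G, (∀ v, c (f v) = c v) → ∀ v, f v = v}

/-- The distinguishing index: least `d` admitting an edge `d`-labeling preserved only by
the identity automorphism. -/
noncomputable def distinguishingIndex {V : Type*} (G : SimpleGraph V) : ℕ :=
  sInf {d : ℕ | ∃ c : Sym2 V → Fin d, ∀ f : G ≃g G,
    (∀ e ∈ G.edgeSet, c (Sym2.map (⇑f) e) = c e) → ∀ v, f v = v}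

/-- The non-neighborhood of a vertex. -/
def nonNbhd {V : Type*} (G : SimpleGraph V) (v : V) : Set V := {u | ¬ G.Adj v u}

/-- The k-fold join of a graph with itself. -/
def kJoin {V : Type*} (G : SimpleGraph V) (k : ℕ) : SimpleGraph (Fin k × V) where
  Adj x y := x.1 ≠ y.1 ∨ (x.1 = y.1 ∧ G.Adj x.2 y.2)
  symm := by
    constructor
    rintro x y (h | ⟨h1, h2⟩)
    · exact Or.inl h.symm
    · exact Or.inr ⟨h1.symm, h2.symm⟩
  loopless := by
    constructor
    rintro x (h | ⟨h1, h2⟩)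
    · exact h rfl
    · exact (SimpleGraph.irrefl _) h2

/-- `n` disjoint copies of `K₂`. -/
def nK2 (n : ℕ) : SimpleGraph (Fin n × Fin 2) where
  Adj x y := x.1 = y.1 ∧ x.2 ≠ y.2
  symm := by constructor; rintro x y ⟨h1, h2⟩; exact ⟨h1.symm, h2.symm⟩
  loopless := by constructor; rintro x ⟨h1, h2⟩; exact h2 rfl

/-- The friendship graph `Fₙ`: the join of `K₁` with `n` copies of `K₂`. -/
def friendshipGraph (n : ℕ) : SimpleGraph (Fin 1 ⊕ (Fin n × Fin 2)) :=
  joinGraph (⊤ : SimpleGraph (Fin 1)) (nK2 n)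

/-- A graph has a Hamiltonian path. -/
def HasHamiltonianPath {V : Type*} [DecidableEq V] (G : SimpleGraph V) : Prop :=
  ∃ (u v : V) (p : G.Walk u v), p.IsHamiltonian

/-!
Leaves on the same side of a star are twins, so a distinguishing colouring is injective on the
leaves of each star; with only `n` colours both stars then use every colour on their leaves, and
exchanging the two stars leaf by leaf (keeping the centres, which are twins as well) preserves the
colouring. Conversely, colour the centres `0` and `n`, the leaves of the first star `0, …, n - 1`
and those of the second `1, …, n`. For `n ≥ 2` the centres are the only universal vertices, which
pins down the leaf of colour `0` in the first star; every vertex is then determined by its colour,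
whether it is universal, and whether it is adjacent to that leaf.
-/

open Function Sum

namespace SimpleGraph

variable {V W V' W' α β : Type*} {G : SimpleGraph V} {G' : SimpleGraph V'}
  {H : SimpleGraph W} {H' : SimpleGraph W'}

@[simp] lemma joinGraph_adj_inl_inl {a b : V} :
    (joinGraph G H).Adj (inl a) (inl b) ↔ G.Adj a b :=
  Iff.rfl

@[simp] lemma joinGraph_adj_inr_inr {a b : W} :
    (joinGraph G H).Adj (inr a) (inr b) ↔ H.Adj a b :=
  Iff.rfl

@[simp] lemma joinGraph_adj_inl_inr {a : V} {b : W} : (joinGraph G H).Adj (inl a) (inr b) :=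
  trivial

@[simp] lemma joinGraph_adj_inr_inl {a : W} {b : V} : (joinGraph G H).Adj (inr a) (inl b) :=
  trivial

@[simps!]
def Iso.joinCongr (e : G ≃g G') (f : H ≃g H') : joinGraph G H ≃g joinGraph G' H' where
  toEquiv := e.toEquiv.sumCongr f.toEquiv
  map_rel_iff' := by rintro (a | a) (b | b) <;> simp [Iso.map_adj_iff]

@[simps!]
def Iso.joinComm : joinGraph G H ≃g joinGraph H G where
  toEquiv := Equiv.sumComm V W
  map_rel_iff' := by rintro (a | a) (b | b) <;> simp

@[simp] lemma isUniversal_joinGraph_inl {a : V} :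
    (joinGraph G H).IsUniversal (inl a) ↔ G.IsUniversal a := by
  refine ⟨fun h b hab => h (inl_injective.ne hab), ?_⟩
  rintro h (b | b) hab
  exacts [h (ne_of_apply_ne inl hab), trivial]

@[simp] lemma isUniversal_joinGraph_inr {a : W} :
    (joinGraph G H).IsUniversal (inr a) ↔ H.IsUniversal a := by
  refine ⟨fun h b hab => h (inr_injective.ne hab), ?_⟩
  rintro h (b | b) hab
  exacts [trivial, h (ne_of_apply_ne inr hab)]

@[simp] lemma isUniversal_completeBipartiteGraph_inl {a : V} :
    (completeBipartiteGraph V W).IsUniversal (inl a) ↔ Subsingleton V := by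
  refine ⟨fun h => ?_, fun h => ?_⟩
  · have hall (b : V) : b = a :=
      by_contra fun hb => by simpa using h (inl_injective.ne (Ne.symm hb))
    exact ⟨fun b b' => (hall b).trans (hall b').symm⟩
  · rintro (b | b) hab
    · exact absurd (congrArg inl (Subsingleton.elim a b)) hab
    · simp

@[simp] lemma isUniversal_completeBipartiteGraph_inr {b : W} :
    (completeBipartiteGraph V W).IsUniversal (inr b) ↔ Subsingleton W := by
  refine ⟨fun h => ?_, fun h => ?_⟩
  · have hall (a : W) : a = b :=
      by_contra fun ha => by simpa using h (inr_injective.ne (Ne.symm ha))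
    exact ⟨fun a a' => (hall a).trans (hall a').symm⟩
  · rintro (a | a) hab
    · simp
    · exact absurd (congrArg inr (Subsingleton.elim b a)) hab

lemma Iso.isUniversal_apply_iff (f : G ≃g G') {v : V} :
    G'.IsUniversal (f v) ↔ G.IsUniversal v := by
  refine ⟨fun h w hvw => ?_, fun h w hvw => ?_⟩
  · exact f.map_adj_iff.mp (h (f.injective.ne hvw))
  · simpa using f.map_adj_iff.mpr (h (w := f.symm w) (by rintro rfl; simp at hvw))

def IsTwin (G : SimpleGraph V) (u v : V) : Prop :=
  ∀ ⦃w⦄, w ≠ u → w ≠ v → (G.Adj u w ↔ G.Adj v w)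

lemma IsTwin.of_isUniversal {u v : V} (hu : G.IsUniversal u) (hv : G.IsUniversal v) :
    G.IsTwin u v :=
  fun _ hwu hwv => ⟨fun _ => hv hwv.symm, fun _ => hu hwu.symm⟩

lemma IsTwin.joinGraph_inl {a b : V} (h : G.IsTwin a b) :
    (joinGraph G H).IsTwin (inl a) (inl b) := by
  rintro (w | w) hwa hwb
  · simpa using h (ne_of_apply_ne inl hwa) (ne_of_apply_ne inl hwb)
  · simp

lemma IsTwin.joinGraph_inr {a b : W} (h : H.IsTwin a b) :
    (joinGraph G H).IsTwin (inr a) (inr b) := by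
  rintro (w | w) hwa hwb
  · simp
  · simpa using h (ne_of_apply_ne inr hwa) (ne_of_apply_ne inr hwb)

lemma isTwin_completeBipartiteGraph_inr (a b : W) :
    (completeBipartiteGraph V W).IsTwin (inr a) (inr b) := by
  rintro (w | w) _ _ <;> simp

def IsTwin.swapIso [DecidableEq V] {u v : V} (h : G.IsTwin u v) : G ≃g G where
  toEquiv := Equiv.swap u v
  map_rel_iff' {a b} := by
    simp only [Equiv.swap_apply_def]
    split_ifs <;> subst_vars <;> grind [IsTwin, SimpleGraph.adj_comm, SimpleGraph.irrefl]

def IsDistinguishing (G : SimpleGraph V) (c : V → α) : Prop :=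
  ∀ f : G ≃g G, (∀ v, c (f v) = c v) → ∀ v, f v = v

lemma IsDistinguishing.comp {c : V → α} (hc : G.IsDistinguishing c) {g : α → β}
    (hg : Injective g) : G.IsDistinguishing (g ∘ c) :=
  fun f hf => hc f fun v => hg (hf v)

lemma IsDistinguishing.ne_of_isTwin {c : V → α} (hc : G.IsDistinguishing c) {u v : V}
    (huv : u ≠ v) (h : G.IsTwin u v) : c u ≠ c v := by
  classical
  intro hcuv
  have hswap : ∀ w, c (Equiv.swap u v w) = c w := by
    intro w
    rcases eq_or_ne w u with rfl | hwu
    · simp [hcuv]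
    rcases eq_or_ne w v with rfl | hwv
    · simp [hcuv]
    · rw [Equiv.swap_apply_of_ne_of_ne hwu hwv]
  exact huv ((Equiv.swap_apply_left u v).symm.trans (hc h.swapIso hswap u)).symm

lemma distinguishingNumber_eq_succ {d : ℕ} (hd : ∃ c : V → Fin (d + 1), G.IsDistinguishing c)
    (hd' : ∀ c : V → Fin d, ¬ G.IsDistinguishing c) : distinguishingNumber G = d + 1 := by
  refine le_antisymm (Nat.sInf_le hd) (le_csInf ⟨_, hd⟩ ?_)
  rintro k ⟨c, hc⟩
  by_contra! hk
  exact hd' _ (IsDistinguishing.comp hc (Fin.castLE_injective (Nat.le_of_lt_succ hk)))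

end SimpleGraph

abbrev starJoin (n : ℕ) : SimpleGraph ((Fin 1 ⊕ Fin n) ⊕ (Fin 1 ⊕ Fin n)) :=
  joinGraph (completeBipartiteGraph (Fin 1) (Fin n)) (completeBipartiteGraph (Fin 1) (Fin n))

namespace starJoin

variable {n : ℕ} {α : Type*}

lemma isTwin_centers : (starJoin n).IsTwin (inl (inl 0)) (inr (inl 0)) :=
  .of_isUniversal (by simp [Fin.subsingleton_iff_le_one]) (by simp [Fin.subsingleton_iff_le_one])

/-- Exchanges the two stars, relabelling the leaves by `σ`, while keeping both centres in place. -/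
def crossIso (σ : Fin n ≃ Fin n) : starJoin n ≃g starJoin n :=
  ((Iso.joinCongr (completeBipartiteGraphCongr (.refl _) σ)
    (completeBipartiteGraphCongr (.refl _) σ.symm)).trans Iso.joinComm).trans
      isTwin_centers.swapIso

lemma not_isDistinguishing_of_leaf_colors_match [NeZero n]
    {c : (Fin 1 ⊕ Fin n) ⊕ (Fin 1 ⊕ Fin n) → α} (σ : Fin n ≃ Fin n)
    (hσ : ∀ i, c (inr (inr (σ i))) = c (inl (inr i))) :
    ¬ (starJoin n).IsDistinguishing c := by
  intro hc
  have hpres : ∀ v, c (crossIso σ v) = c v := by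
    rintro (⟨a | i⟩ | ⟨a | j⟩)
    · simp [crossIso, IsTwin.swapIso, Fin.fin_one_eq_zero a]
    · simpa [crossIso, IsTwin.swapIso, Equiv.swap_apply_def] using hσ i
    · simp [crossIso, IsTwin.swapIso, Fin.fin_one_eq_zero a]
    · simpa [crossIso, IsTwin.swapIso, Equiv.swap_apply_def] using (hσ (σ.symm j)).symm
  simpa [crossIso, IsTwin.swapIso, Equiv.swap_apply_def] using
    hc (crossIso σ) hpres (inl (inr 0))

theorem not_isDistinguishing (c : (Fin 1 ⊕ Fin n) ⊕ (Fin 1 ⊕ Fin n) → Fin n) :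
    ¬ (starJoin n).IsDistinguishing c := by
  intro hc
  have : NeZero n := NeZero.of_pos (c (inl (inl 0))).pos
  have inj₁ : Injective fun i => c (inl (inr i)) := fun i j hij => by_contra fun hne =>
    hc.ne_of_isTwin (by simpa using hne) (isTwin_completeBipartiteGraph_inr i j).joinGraph_inl hij
  have inj₂ : Injective fun j => c (inr (inr j)) := fun i j hij => by_contra fun hne =>
    hc.ne_of_isTwin (by simpa using hne) (isTwin_completeBipartiteGraph_inr i j).joinGraph_inr hij
  -- With only `n` colours, each side's leaves use every colour exactly once.
  let e₁ := Equiv.ofBijective _ (Finite.injective_iff_bijective.mp inj₁)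
  let e₂ := Equiv.ofBijective _ (Finite.injective_iff_bijective.mp inj₂)
  exact not_isDistinguishing_of_leaf_colors_match (e₁.trans e₂.symm)
    (fun i => e₂.apply_symm_apply (e₁ i)) hc

def coloring (n : ℕ) : (Fin 1 ⊕ Fin n) ⊕ (Fin 1 ⊕ Fin n) → Fin (n + 1)
  | inl (inl _) => 0
  | inl (inr i) => i.castSucc
  | inr (inl _) => Fin.last n
  | inr (inr j) => j.succ

lemma eq_of_coloring_eq_zero {v : (Fin 1 ⊕ Fin (n + 2)) ⊕ (Fin 1 ⊕ Fin (n + 2))}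
    (hv : coloring (n + 2) v = 0) (hu : ¬ (starJoin (n + 2)).IsUniversal v) :
    v = inl (inr 0) := by
  rcases v with (⟨a | i⟩ | ⟨a | j⟩) <;> simp_all [coloring, Fin.subsingleton_iff_le_one]

lemma eq_of_coloring_eq {v w : (Fin 1 ⊕ Fin (n + 2)) ⊕ (Fin 1 ⊕ Fin (n + 2))}
    (hc : coloring (n + 2) v = coloring (n + 2) w)
    (hu : (starJoin (n + 2)).IsUniversal v ↔ (starJoin (n + 2)).IsUniversal w)
    (ha : (starJoin (n + 2)).Adj v (inl (inr 0)) ↔ (starJoin (n + 2)).Adj w (inl (inr 0))) :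
    v = w := by
  rcases v with (⟨a | i⟩ | ⟨a | i⟩) <;> rcases w with (⟨b | j⟩ | ⟨b | j⟩) <;>
    simp_all [coloring, Fin.subsingleton_iff_le_one, Fin.fin_one_eq_zero]

theorem isDistinguishing_coloring : (starJoin (n + 2)).IsDistinguishing (coloring (n + 2)) := by
  intro f hf
  have huniv (v) : (starJoin (n + 2)).IsUniversal (f v) ↔ (starJoin (n + 2)).IsUniversal v :=
    f.isUniversal_apply_iff
  have hleaf : f (inl (inr 0)) = inl (inr 0) :=
    eq_of_coloring_eq_zero ((hf _).trans (by simp [coloring]))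
      ((huniv _).not.mpr (by simp [Fin.subsingleton_iff_le_one]))
  intro v
  refine eq_of_coloring_eq (hf v) (huniv v) ?_
  conv_lhs => rw [← hleaf]
  exact f.map_adj_iff

end starJoin

theorem distinguishingNumber_join_star (n : ℕ) (hn : 2 ≤ n) :
    distinguishingNumber (joinGraph (completeBipartiteGraph (Fin 1) (Fin n))
      (completeBipartiteGraph (Fin 1) (Fin n))) = n + 1 := by
  obtain ⟨m, rfl⟩ : ∃ m, n = m + 2 := ⟨n - 2, by omega⟩
  exact distinguishingNumber_eq_succ ⟨_, starJoin.isDistinguishing_coloring⟩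
    starJoin.not_isDistinguishing
end

section
/- For all integers n, m ≥ 2 with n ≠ m, the distinguishing index of the join of paths satisfies D'(Pₙ + Pₘ) = 2. -/
open SimpleGraph

/-
Running backwards along `Pₙ` and then along `Pₘ` gives a Hamiltonian path of `Pₙ + Pₘ`, i.e. a
spanning copy of `Pₙ₊ₘ`. Colour its edges `1` and all other edges `0`. An automorphism preserving
this colouring is an automorphism of `Pₙ₊ₘ`, hence the identity or the reversal, and when `n ≠ m`
the reversal is not an automorphism of the join: it sends two vertices at distance `2` on the
longer path to vertices on different paths. One colour does not suffice, since reversing `Pₙ` is a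
nontrivial automorphism.
-/

namespace SimpleGraph

variable {V : Type*}

def IsDistinguishingEdgeColoring {α : Type*} (G : SimpleGraph V) (c : Sym2 V → α) : Prop :=
  ∀ f : G ≃g G, (∀ e ∈ G.edgeSet, c (Sym2.map f e) = c e) → ∀ v, f v = v

lemma distinguishingIndex_le {G : SimpleGraph V} {d : ℕ} {c : Sym2 V → Fin d}
    (hc : G.IsDistinguishingEdgeColoring c) : distinguishingIndex G ≤ d :=
  Nat.sInf_le ⟨c, hc⟩

lemma two_le_distinguishingIndex {G : SimpleGraph V}
    (hG : ∃ d, ∃ c : Sym2 V → Fin d, G.IsDistinguishingEdgeColoring c)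
    (f : G ≃g G) {v : V} (hv : f v ≠ v) : 2 ≤ distinguishingIndex G := by
  obtain ⟨c, hc⟩ : ∃ c : Sym2 V → Fin (distinguishingIndex G), G.IsDistinguishingEdgeColoring c :=
    Nat.sInf_mem hG
  by_contra! h
  have : Subsingleton (Fin (distinguishingIndex G)) := Fin.subsingleton_iff_le_one.2 (by omega)
  exact hv (hc f (fun _ _ => Subsingleton.elim _ _) v)

open Classical in
noncomputable def subgraphEdgeColoring (H : SimpleGraph V) (e : Sym2 V) : Fin 2 :=
  if e ∈ H.edgeSet then 1 else 0

lemma subgraphEdgeColoring_eq_one_iff {H : SimpleGraph V} {e : Sym2 V} :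
    H.subgraphEdgeColoring e = 1 ↔ e ∈ H.edgeSet := by
  unfold subgraphEdgeColoring
  split_ifs with h <;> simp [h]

lemma isDistinguishingEdgeColoring_subgraphEdgeColoring {G H : SimpleGraph V} (hHG : H ≤ G)
    (hH : ∀ f : G ≃g G, (∀ u v, H.Adj (f u) (f v) ↔ H.Adj u v) → ∀ v, f v = v) :
    G.IsDistinguishingEdgeColoring H.subgraphEdgeColoring := by
  intro f hf
  refine hH f fun u v => ?_
  have key (huv : G.Adj u v) : H.Adj (f u) (f v) ↔ H.Adj u v := by
    simpa only [Sym2.map_mk, subgraphEdgeColoring_eq_one_iff, mem_edgeSet, eq_iff_iff] using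
      congrArg (· = 1) (hf s(u, v) huv)
  exact ⟨fun h => (key (f.map_adj_iff.1 (hHG h))).1 h, fun h => (key (hHG h)).2 h⟩

section Path

def pathGraph.revIso (N : ℕ) : pathGraph N ≃g pathGraph N where
  toEquiv := Fin.revPerm
  map_rel_iff' {a b} := by
    simp only [Fin.revPerm_apply, pathGraph_adj, Fin.val_rev]
    omega

variable {N : ℕ}

lemma pathGraph.apply_eq_self_of_apply_zero (g : pathGraph N ≃g pathGraph N) (hN : 0 < N)
    (h0 : g ⟨0, hN⟩ = ⟨0, hN⟩) (k : Fin N) : g k = k := by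
  suffices h : ∀ j : ℕ, ∀ i : Fin N, i.val ≤ j → g i = i from h k k le_rfl
  intro j
  induction j with
  | zero =>
    intro i hi
    rwa [show i = ⟨0, hN⟩ from Fin.ext (Nat.le_zero.1 hi)]
  | succ j ih =>
    intro i hi
    rcases Nat.lt_or_ge i.val (j + 1) with hij | hij
    · exact ih i (by omega)
    -- `g i` is adjacent to `g j = j`, and cannot be `j - 1 = g (j - 1)` by injectivity.
    have hj : g ⟨j, by omega⟩ = ⟨j, by omega⟩ := ih _ le_rfl
    have hadj := g.map_adj_iff.2 (show (pathGraph N).Adj ⟨j, by omega⟩ i by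
      rw [pathGraph_adj, Fin.val_mk]; omega)
    rw [hj, pathGraph_adj, Fin.val_mk] at hadj
    rcases hadj with hadj | hadj
    · exact Fin.ext (by omega)
    · have hfix := ih (g i) (by omega)
      have := congrArg Fin.val (g.injective hfix)
      omega

lemma pathGraph.val_apply_zero_eq_zero_or_add_one_eq (g : pathGraph N ≃g pathGraph N) (hN : 0 < N) :
    (g ⟨0, hN⟩).val = 0 ∨ (g ⟨0, hN⟩).val + 1 = N := by
  set x := g ⟨0, hN⟩ with hx
  by_contra! h
  -- An inner vertex has two neighbours; their preimages would both be `1`, the only neighbour of `0`.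
  have hpre (y : Fin N) (hy : (pathGraph N).Adj x y) : (g.symm y).val = 1 := by
    have := g.symm.map_adj_iff.2 hy
    rw [hx, RelIso.symm_apply_apply, pathGraph_adj] at this
    simp only at this
    omega
  have hlo := hpre ⟨x.val - 1, by omega⟩ (by simp only [pathGraph_adj]; omega)
  have hhi := hpre ⟨x.val + 1, by omega⟩ (pathGraph_adj.2 (.inl rfl))
  have := congrArg Fin.val (g.symm.injective (Fin.ext (hlo.trans hhi.symm)))
  simp only at this
  omega

lemma pathGraph.eq_refl_or_eq_revIso (g : pathGraph N ≃g pathGraph N) :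
    g = Iso.refl ∨ g = revIso N := by
  rcases Nat.eq_zero_or_pos N with rfl | hN
  · exact .inl (RelIso.ext fun k => k.elim0)
  rcases pathGraph.val_apply_zero_eq_zero_or_add_one_eq g hN with h | h
  · exact .inl (RelIso.ext (pathGraph.apply_eq_self_of_apply_zero g hN (Fin.ext h)))
  · have h0 : (g.trans (revIso N)) ⟨0, hN⟩ = ⟨0, hN⟩ := Fin.ext <| by
      simp only [revIso, RelIso.trans_apply, RelIso.coe_fn_mk, Fin.revPerm_apply, Fin.val_rev]
      omega
    refine .inr (RelIso.ext fun k => ?_)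
    simpa [revIso] using congrArg Fin.rev (pathGraph.apply_eq_self_of_apply_zero _ hN h0 k)

end Path

section Join

variable {V' W W' : Type*} {G : SimpleGraph V} {G' : SimpleGraph V'} {H : SimpleGraph W}
  {H' : SimpleGraph W'}

def Iso.joinGraphCongr (φ : G ≃g G') (ψ : H ≃g H') : joinGraph G H ≃g joinGraph G' H' where
  toEquiv := Equiv.sumCongr φ.toEquiv ψ.toEquiv
  map_rel_iff' {a b} := by
    rcases a with a | a <;> rcases b with b | b
    · exact φ.map_adj_iff
    · exact Iff.rfl
    · exact Iff.rfl
    · exact ψ.map_adj_iff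

variable {n m : ℕ}

/-- The Hamiltonian path of `Pₙ + Pₘ` running backwards along `Pₙ` and then forwards along `Pₘ`,
as the position of each vertex on it. -/
def joinPathsHamiltonian (n m : ℕ) : Fin n ⊕ Fin m ≃ Fin (n + m) :=
  (Equiv.sumCongr Fin.revPerm (Equiv.refl _)).trans finSumFinEquiv

@[simp]
lemma val_joinPathsHamiltonian_inl (a : Fin n) :
    (joinPathsHamiltonian n m (Sum.inl a)).val = n - (a + 1) := by
  simp [joinPathsHamiltonian, Fin.val_rev]

@[simp]
lemma val_joinPathsHamiltonian_inr (b : Fin m) :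
    (joinPathsHamiltonian n m (Sum.inr b)).val = n + b := by
  simp [joinPathsHamiltonian]

lemma joinGraph_pathGraph_adj_iff (u v : Fin n ⊕ Fin m) :
    (joinGraph (pathGraph n) (pathGraph m)).Adj u v ↔
      ((joinPathsHamiltonian n m u).val < n ↔ n ≤ (joinPathsHamiltonian n m v).val) ∨
        (pathGraph (n + m)).Adj (joinPathsHamiltonian n m u) (joinPathsHamiltonian n m v) := by
  rcases u with a | a <;> rcases v with b | b <;>
    simp only [joinGraph, pathGraph_adj, val_joinPathsHamiltonian_inl,
      val_joinPathsHamiltonian_inr] <;> grind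

lemma pathGraph_comap_joinPathsHamiltonian_le :
    (pathGraph (n + m)).comap (joinPathsHamiltonian n m) ≤ joinGraph (pathGraph n) (pathGraph m) :=
  fun u v h => (joinGraph_pathGraph_adj_iff u v).2 (Or.inr h)

lemma not_forall_joinPathsHamiltonian_apply_eq_rev (hn : 2 ≤ n) (hm : 2 ≤ m) (hnm : n ≠ m)
    (f : joinGraph (pathGraph n) (pathGraph m) ≃g joinGraph (pathGraph n) (pathGraph m)) :
    ¬ ∀ v, joinPathsHamiltonian n m (f v) = (joinPathsHamiltonian n m v).rev := by
  intro hrev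
  have side (p q : Fin (n + m)) :
      ((p.rev < n ↔ n ≤ q.rev) ∨ (pathGraph (n + m)).Adj p.rev q.rev) ↔
        ((p < n ↔ n ≤ q) ∨ (pathGraph (n + m)).Adj p q) := by
    have := f.map_adj_iff (v := (joinPathsHamiltonian n m).symm p)
      (w := (joinPathsHamiltonian n m).symm q)
    simpa [joinGraph_pathGraph_adj_iff, hrev] using this
  -- Positions `p` and `p + 2` on the longer path whose reflections lie on different paths.
  rcases hnm.lt_or_gt with h | h
  · have := side ⟨m - 1, by omega⟩ ⟨m + 1, by omega⟩
    simp only [Fin.val_rev, pathGraph_adj] at this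
    omega
  · have := side ⟨m - 2, by omega⟩ ⟨m, by omega⟩
    simp only [Fin.val_rev, pathGraph_adj] at this
    omega

lemma joinGraph_pathGraph_apply_eq_self_of_comap_adj_iff (hn : 2 ≤ n) (hm : 2 ≤ m) (hnm : n ≠ m)
    (f : joinGraph (pathGraph n) (pathGraph m) ≃g joinGraph (pathGraph n) (pathGraph m))
    (hf : ∀ u v, ((pathGraph (n + m)).comap (joinPathsHamiltonian n m)).Adj (f u) (f v) ↔
      ((pathGraph (n + m)).comap (joinPathsHamiltonian n m)).Adj u v) (v : Fin n ⊕ Fin m) :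
    f v = v := by
  set e := joinPathsHamiltonian n m
  let g : pathGraph (n + m) ≃g pathGraph (n + m) :=
    ⟨e.symm.trans (f.toEquiv.trans e), fun {p q} => by simpa using hf (e.symm p) (e.symm q)⟩
  rcases pathGraph.eq_refl_or_eq_revIso g with hid | hrev
  · simpa [g] using DFunLike.congr_fun hid (e v)
  · exact absurd (fun v => by simpa [g, pathGraph.revIso] using DFunLike.congr_fun hrev (e v))
      (not_forall_joinPathsHamiltonian_apply_eq_rev hn hm hnm f)

end Join

end SimpleGraph

theorem distinguishingIndex_join_paths (n m : ℕ) (hn : 2 ≤ n) (hm : 2 ≤ m) (hnm : n ≠ m) :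
    distinguishingIndex (joinGraph (SimpleGraph.pathGraph n) (SimpleGraph.pathGraph m)) = 2 := by
  have hc := isDistinguishingEdgeColoring_subgraphEdgeColoring
    pathGraph_comap_joinPathsHamiltonian_le
    (joinGraph_pathGraph_apply_eq_self_of_comap_adj_iff hn hm hnm)
  refine le_antisymm (distinguishingIndex_le hc) (two_le_distinguishingIndex ⟨2, _, hc⟩
    ((pathGraph.revIso n).joinGraphCongr Iso.refl) (v := Sum.inl ⟨0, by omega⟩) ?_)
  refine Sum.inl_injective.ne (Fin.ne_of_val_ne ?_)
  simp only [pathGraph.revIso, Fin.revPerm_apply, Fin.val_rev]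
  omega
end
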